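/- Let Ψ₁, Ψ₂ be entropy functions that are strictly convex on (0,∞) and finite on (0,∞). Suppose α_n → ∞, for each n the measure π^{α_n} attains C_ub^{α_n}(μ,ν), and π^{α_n} converges weakly to a finite positive Borel measure π on X×Y. Then π is a coupling of μ and ν (π ∈ Π(μ,ν)) and π is optimal for the optimal transport problem: ∫ c dπ = C(μ,ν). -/

import Mathlib

/-!
Comparing with a coupling shows `C_ub^α(μ,ν) ≤ C(μ,ν) < ∞`, so along the minimisers
`α_n D_{Ψᵢ}` stays bounded and both marginal divergences tend to `0`. Strict convexity makes
`Ψ` positive away from `1`, and convexity through the point `1` then gives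
`|t - 1| ≤ ε + C_ε Ψ(t)`; hence the marginal densities tend to `1` in `L¹`, the marginals
converge weakly to `μ` and `ν`, and by uniqueness of weak limits `π` is a coupling. On the
compact set `X × Y` the cost agrees with a bounded continuous function, so
`∫ c dπ = lim ∫ c dπ_n ≤ C(μ,ν)`; the reverse inequality holds since `π` is a coupling.
-/

open MeasureTheory Filter
open scoped ENNReal NNReal Topology Classical

noncomputable section

/-- The quadratic transport cost `c(x,y) = τ‖x-y‖₂²`. -/
def cost {d : ℕ} (τ : ℝ) (x y : EuclideanSpace ℝ (Fin d)) : ℝ := τ * ‖x - y‖ ^ 2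

/-- An entropy function `Ψ : ℝ → [0,∞]`: convex, lower semicontinuous, non-negative
(automatic from the codomain), `Ψ(x) = ∞` for `x < 0`, `Ψ(1) = 0`, and superlinear. -/
structure IsEntropy (Ψ : ℝ → ℝ≥0∞) : Prop where
  convex : ∀ x y : ℝ, ∀ t : ℝ, 0 ≤ t → t ≤ 1 →
    Ψ (t * x + (1 - t) * y) ≤ ENNReal.ofReal t * Ψ x + ENNReal.ofReal (1 - t) * Ψ y
  lsc : LowerSemicontinuous Ψ
  eq_top_of_neg : ∀ x : ℝ, x < 0 → Ψ x = ∞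
  one_eq_zero : Ψ 1 = 0
  superlinear : Tendsto (fun t : ℝ => Ψ t / ENNReal.ofReal t) atTop (𝓝 ∞)

/-- The Csiszár divergence `D_Ψ(ρ|σ) = ∫ Ψ(dρ/dσ) dσ` if `ρ ≪ σ`, and `∞` otherwise. -/
def csiszar {Z : Type*} [MeasurableSpace Z] (Ψ : ℝ → ℝ≥0∞) (ρ σ : Measure Z) : ℝ≥0∞ :=
  if ρ ≪ σ then ∫⁻ z, Ψ ((ρ.rnDeriv σ z).toReal) ∂σ else ∞

/-- The objective of the `α`-scaled unbalanced optimal transport problem: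
`∫ c dπ + α D_{Ψ₁}(π₀|μ) + α D_{Ψ₂}(π₁|ν)`. -/
def uotObj {d : ℕ} (τ α : ℝ) (Ψ₁ Ψ₂ : ℝ → ℝ≥0∞)
    (μ ν : Measure (EuclideanSpace ℝ (Fin d)))
    (π : Measure (EuclideanSpace ℝ (Fin d) × EuclideanSpace ℝ (Fin d))) : ℝ≥0∞ :=
  (∫⁻ z, ENNReal.ofReal (cost τ z.1 z.2) ∂π)
    + ENNReal.ofReal α * csiszar Ψ₁ (π.map Prod.fst) μ
    + ENNReal.ofReal α * csiszar Ψ₂ (π.map Prod.snd) ν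

/-- The `α`-scaled unbalanced optimal transport cost `C_ub^α(μ,ν)`, the infimum of the
objective over finite positive Borel measures `π` supported on `X × Y`. -/
def UOTcost {d : ℕ} (τ α : ℝ) (Ψ₁ Ψ₂ : ℝ → ℝ≥0∞) (X Y : Set (EuclideanSpace ℝ (Fin d)))
    (μ ν : Measure (EuclideanSpace ℝ (Fin d))) : ℝ≥0∞ :=
  ⨅ (π : Measure (EuclideanSpace ℝ (Fin d) × EuclideanSpace ℝ (Fin d)))
    (_ : IsFiniteMeasure π) (_ : π ((X ×ˢ Y)ᶜ) = 0), uotObj τ α Ψ₁ Ψ₂ μ ν π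

/-- The optimal transport cost `C(μ,ν) = inf_{π ∈ Π(μ,ν)} ∫ c dπ`. -/
def OTcost {d : ℕ} (τ : ℝ) (μ ν : Measure (EuclideanSpace ℝ (Fin d))) : ℝ≥0∞ :=
  ⨅ (π : Measure (EuclideanSpace ℝ (Fin d) × EuclideanSpace ℝ (Fin d)))
    (_ : π.map Prod.fst = μ ∧ π.map Prod.snd = ν),
    ∫⁻ z, ENNReal.ofReal (cost τ z.1 z.2) ∂π


/-- `Ψ` is strictly convex on `(0,∞)`. -/
def StrictlyConvexOnPos (Ψ : ℝ → ℝ≥0∞) : Prop :=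
  ∀ x ∈ Set.Ioi (0:ℝ), ∀ y ∈ Set.Ioi (0:ℝ), x ≠ y → ∀ t : ℝ, 0 < t → t < 1 →
    Ψ (t * x + (1 - t) * y) < ENNReal.ofReal t * Ψ x + ENNReal.ofReal (1 - t) * Ψ y

open BoundedContinuousFunction

lemma ENNReal.tendsto_nhds_zero_of_mul_le {ι : Type*} {l : Filter ι} {x D : ι → ℝ≥0∞}
    {M : ℝ≥0∞} (hx : Tendsto x l (𝓝 ∞)) (hM : M ≠ ∞) (h : ∀ i, x i * D i ≤ M) :
    Tendsto D l (𝓝 0) := by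
  have hMx : Tendsto (fun i => M / x i) l (𝓝 0) := by
    simpa using ENNReal.Tendsto.const_div hx (Or.inr hM)
  refine tendsto_of_tendsto_of_tendsto_of_le_of_le' tendsto_const_nhds hMx
    (Eventually.of_forall fun _ => zero_le) ?_
  filter_upwards [hx.eventually_ne ENNReal.top_ne_zero] with i hi
  rw [ENNReal.le_div_iff_mul_le (Or.inl hi) (Or.inr hM), mul_comm]
  exact h i

lemma IsEntropy.apply_affine_le {Ψ : ℝ → ℝ≥0∞} (hΨ : IsEntropy Ψ) (t : ℝ) {s : ℝ}
    (hs₀ : 0 ≤ s) (hs₁ : s ≤ 1) : Ψ (s * t + (1 - s)) ≤ ENNReal.ofReal s * Ψ t := by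
  simpa [hΨ.one_eq_zero] using hΨ.convex t 1 s hs₀ hs₁

lemma StrictlyConvexOnPos.pos_of_ne_one {Ψ : ℝ → ℝ≥0∞} (hsc : StrictlyConvexOnPos Ψ)
    (h1 : Ψ 1 = 0) {u : ℝ} (hu : 0 < u) (hne : u ≠ 1) : 0 < Ψ u := by
  refine pos_iff_ne_zero.2 fun h0 => ?_
  have := hsc 1 (Set.mem_Ioi.2 one_pos) u hu hne.symm (1 / 2) (by norm_num) (by norm_num)
  simp [h1, h0] at this

lemma IsEntropy.exists_abs_sub_one_le {Ψ : ℝ → ℝ≥0∞} (hΨ : IsEntropy Ψ)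
    (hsc : StrictlyConvexOnPos Ψ) (hfin : ∀ x : ℝ, 0 < x → Ψ x ≠ ∞)
    {ε : ℝ} (hε₀ : 0 < ε) (hε₁ : ε < 1) :
    ∃ C : ℝ, ∀ t : ℝ, Ψ t ≠ ∞ → |t - 1| ≤ ε + C * (Ψ t).toReal := by
  have hpos : ∀ u : ℝ, |u - 1| = ε → 0 < (Ψ u).toReal := fun u hu => by
    have hu₀ : 0 < u := by linarith [neg_abs_le (u - 1)]
    have hu₁ : u ≠ 1 := fun h => by simp [h] at hu; linarith
    exact ENNReal.toReal_pos (hsc.pos_of_ne_one hΨ.one_eq_zero hu₀ hu₁).ne' (hfin u hu₀)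
  set K := min (Ψ (1 + ε)).toReal (Ψ (1 - ε)).toReal
  have hK : 0 < K := lt_min (hpos _ (by simp [abs_of_pos hε₀]))
    (hpos _ (by simp [abs_of_pos hε₀]))
  refine ⟨ε / K, fun t ht => ?_⟩
  rcases le_or_gt |t - 1| ε with h | h
  · have : 0 ≤ ε / K * (Ψ t).toReal := by positivity
    linarith
  -- Far from `1`, convexity between `t` and `1` compares `Ψ t` with `Ψ (1 ± ε) ≥ K`.
  set s := ε / |t - 1|
  have hd : 0 < |t - 1| := hε₀.trans h
  have hs₀ : 0 < s := div_pos hε₀ hd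
  have hs₁ : s < 1 := (div_lt_one hd).2 h
  have hu : |s * t + (1 - s) - 1| = ε := by
    rw [show s * t + (1 - s) - 1 = s * (t - 1) by ring, abs_mul, abs_of_pos hs₀,
      div_mul_cancel₀ _ hd.ne']
  have hKu : K ≤ (Ψ (s * t + (1 - s))).toReal := by
    rcases abs_eq hε₀.le |>.1 hu with hu | hu
    · exact (min_le_left _ _).trans_eq (by rw [show s * t + (1 - s) = 1 + ε by linarith])
    · exact (min_le_right _ _).trans_eq (by rw [show s * t + (1 - s) = 1 - ε by linarith])
  have hconv : (Ψ (s * t + (1 - s))).toReal ≤ s * (Ψ t).toReal := by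
    simpa [ENNReal.toReal_mul, hs₀.le] using
      ENNReal.toReal_mono (ENNReal.mul_ne_top ENNReal.ofReal_ne_top ht)
        (hΨ.apply_affine_le t hs₀.le hs₁.le)
  calc |t - 1| = ε / s := (div_div_cancel₀ hε₀.ne').symm
    _ ≤ ε / K * (Ψ t).toReal := by
      rw [div_le_iff₀ hs₀]
      calc ε = ε / K * K := (div_mul_cancel₀ ε hK.ne').symm
        _ ≤ ε / K * (s * (Ψ t).toReal) := by gcongr; exact hKu.trans hconv
        _ = ε / K * (Ψ t).toReal * s := by ring
    _ ≤ ε + ε / K * (Ψ t).toReal := le_add_of_nonneg_left hε₀.le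

section Csiszar

variable {Ω : Type*} [MeasurableSpace Ω] {Ψ : ℝ → ℝ≥0∞}

lemma csiszar_self (hΨ : Ψ 1 = 0) (μ : Measure Ω) [SigmaFinite μ] : csiszar Ψ μ μ = 0 := by
  rw [csiszar, if_pos Measure.AbsolutelyContinuous.rfl]
  refine (lintegral_congr_ae ?_).trans lintegral_zero
  filter_upwards [μ.rnDeriv_self] with x hx
  simp [hx, hΨ]

lemma absolutelyContinuous_of_csiszar_ne_top {ρ μ : Measure Ω} (hD : csiszar Ψ ρ μ ≠ ∞) :
    ρ ≪ μ := by
  by_contra h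
  exact hD (if_neg h)

lemma csiszar_of_absolutelyContinuous {ρ μ : Measure Ω} (h : ρ ≪ μ) :
    csiszar Ψ ρ μ = ∫⁻ x, Ψ ((ρ.rnDeriv μ x).toReal) ∂μ :=
  if_pos h

lemma integral_abs_rnDeriv_sub_one_le (hΨ : Measurable Ψ) {ρ μ : Measure Ω}
    [IsFiniteMeasure ρ] [IsProbabilityMeasure μ] (hD : csiszar Ψ ρ μ ≠ ∞) {ε C : ℝ}
    (hbound : ∀ t : ℝ, Ψ t ≠ ∞ → |t - 1| ≤ ε + C * (Ψ t).toReal) :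
    ∫ x, |(ρ.rnDeriv μ x).toReal - 1| ∂μ ≤ ε + C * (csiszar Ψ ρ μ).toReal := by
  have hac := absolutelyContinuous_of_csiszar_ne_top hD
  rw [csiszar_of_absolutelyContinuous hac] at hD ⊢
  have hΨr : Measurable fun x => Ψ ((ρ.rnDeriv μ x).toReal) :=
    hΨ.comp (Measure.measurable_rnDeriv ρ μ).ennreal_toReal
  have hfin := ae_lt_top hΨr hD
  have hint : Integrable (fun x => (Ψ ((ρ.rnDeriv μ x).toReal)).toReal) μ :=
    integrable_toReal_of_lintegral_ne_top hΨr.aemeasurable hD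
  calc ∫ x, |(ρ.rnDeriv μ x).toReal - 1| ∂μ
      ≤ ∫ x, ε + C * (Ψ ((ρ.rnDeriv μ x).toReal)).toReal ∂μ := by
        refine integral_mono_ae (Measure.integrable_toReal_rnDeriv.sub (integrable_const 1)).abs
          ((integrable_const ε).add (hint.const_mul C)) ?_
        filter_upwards [hfin] with x hx using hbound _ hx.ne
    _ = ε + C * (∫⁻ x, Ψ ((ρ.rnDeriv μ x).toReal) ∂μ).toReal := by
        rw [integral_add (integrable_const ε) (hint.const_mul C), integral_const_mul,
          integral_toReal hΨr.aemeasurable hfin]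
        simp

lemma abs_integral_sub_integral_le [TopologicalSpace Ω] [OpensMeasurableSpace Ω]
    {ρ μ : Measure Ω} [IsFiniteMeasure ρ] [IsFiniteMeasure μ]
    (hac : ρ ≪ μ) (f : Ω →ᵇ ℝ) :
    |∫ x, f x ∂ρ - ∫ x, f x ∂μ| ≤ ‖f‖ * ∫ x, |(ρ.rnDeriv μ x).toReal - 1| ∂μ := by
  have hρ : Integrable (fun x => (ρ.rnDeriv μ x).toReal * f x) μ :=
    (integrable_toReal_rnDeriv_mul_iff hac).2 (f.integrable ρ)
  rw [← integral_toReal_rnDeriv_mul hac, ← integral_sub hρ (f.integrable μ), mul_comm,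
    ← integral_mul_const, ← Real.norm_eq_abs]
  refine norm_integral_le_of_norm_le
    ((Measure.integrable_toReal_rnDeriv.sub (integrable_const 1)).abs.mul_const _)
    (Eventually.of_forall fun x => ?_)
  rw [← sub_one_mul, norm_mul, Real.norm_eq_abs]
  exact mul_le_mul_of_nonneg_left (f.norm_coe_le_norm x) (abs_nonneg _)

variable {ι : Type*} {l : Filter ι} {ρ : ι → Measure Ω} [∀ i, IsFiniteMeasure (ρ i)]
  {μ : Measure Ω} [IsProbabilityMeasure μ]

lemma tendsto_integral_abs_rnDeriv_sub_one (hΨ : IsEntropy Ψ) (hsc : StrictlyConvexOnPos Ψ)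
    (hfin : ∀ x : ℝ, 0 < x → Ψ x ≠ ∞) (hD : Tendsto (fun i => csiszar Ψ (ρ i) μ) l (𝓝 0)) :
    Tendsto (fun i => ∫ x, |((ρ i).rnDeriv μ x).toReal - 1| ∂μ) l (𝓝 0) := by
  refine tendsto_order.2 ⟨fun b hb => Eventually.of_forall fun i =>
    hb.trans_le (integral_nonneg fun _ => abs_nonneg _), fun b hb => ?_⟩
  obtain ⟨C, hC⟩ := hΨ.exists_abs_sub_one_le hsc hfin (ε := min (b / 2) (1 / 2))
    (by positivity) ((min_le_right _ _).trans_lt (by norm_num))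
  have hCD : Tendsto (fun i => C * (csiszar Ψ (ρ i) μ).toReal) l (𝓝 0) := by
    simpa using ((ENNReal.tendsto_toReal ENNReal.zero_ne_top).comp hD).const_mul C
  filter_upwards [hD.eventually_ne ENNReal.zero_ne_top, hCD.eventually_lt_const (half_pos hb)]
    with i hi hCi
  calc ∫ x, |((ρ i).rnDeriv μ x).toReal - 1| ∂μ
      ≤ min (b / 2) (1 / 2) + C * (csiszar Ψ (ρ i) μ).toReal :=
        integral_abs_rnDeriv_sub_one_le hΨ.lsc.measurable hi hC
    _ < b := by linarith [min_le_left (b / 2) (1 / 2)]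

lemma tendsto_integral_of_tendsto_csiszar [TopologicalSpace Ω] [OpensMeasurableSpace Ω]
    (hΨ : IsEntropy Ψ) (hsc : StrictlyConvexOnPos Ψ)
    (hfin : ∀ x : ℝ, 0 < x → Ψ x ≠ ∞) (hD : Tendsto (fun i => csiszar Ψ (ρ i) μ) l (𝓝 0))
    (f : Ω →ᵇ ℝ) : Tendsto (fun i => ∫ x, f x ∂ρ i) l (𝓝 (∫ x, f x ∂μ)) := by
  rw [tendsto_iff_norm_sub_tendsto_zero]
  refine squeeze_zero' (Eventually.of_forall fun _ => norm_nonneg _) ?_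
    (by simpa using (tendsto_integral_abs_rnDeriv_sub_one hΨ hsc hfin hD).const_mul ‖f‖)
  filter_upwards [hD.eventually_ne ENNReal.zero_ne_top] with i hi
  exact abs_integral_sub_integral_le (absolutelyContinuous_of_csiszar_ne_top hi) f

end Csiszar

lemma map_eq_of_tendsto_integral {Z W ι : Type*} [MeasurableSpace Z] [TopologicalSpace Z]
    [OpensMeasurableSpace Z] [MeasurableSpace W] [TopologicalSpace W] [HasOuterApproxClosed W]
    [BorelSpace W] {l : Filter ι} [l.NeBot] {π : ι → Measure Z} {πlim : Measure Z}
    [IsFiniteMeasure πlim] {μ : Measure W} [IsFiniteMeasure μ] {p : Z → W} (hp : Continuous p)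
    (hπ : ∀ f : Z →ᵇ ℝ, Tendsto (fun i => ∫ z, f z ∂π i) l (𝓝 (∫ z, f z ∂πlim)))
    (hμ : ∀ f : W →ᵇ ℝ, Tendsto (fun i => ∫ w, f w ∂(π i).map p) l (𝓝 (∫ w, f w ∂μ))) :
    πlim.map p = μ := by
  have hmap : ∀ (m : Measure Z) (f : W →ᵇ ℝ),
      ∫ w, f w ∂m.map p = ∫ z, f.compContinuous ⟨p, hp⟩ z ∂m := fun m f =>
    integral_map hp.aemeasurable f.continuous.aestronglyMeasurable
  refine ext_of_forall_integral_eq_of_IsFiniteMeasure fun f => ?_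
  rw [hmap]
  exact tendsto_nhds_unique (hπ _) (by simpa only [hmap] using hμ f)

lemma measure_compl_prod_eq_zero {α β : Type*} [MeasurableSpace α] [MeasurableSpace β]
    {γ : Measure (α × β)} {X : Set α} {Y : Set β} (hX : γ.map Prod.fst Xᶜ = 0)
    (hY : γ.map Prod.snd Yᶜ = 0) : γ (X ×ˢ Y)ᶜ = 0 := by
  rw [Set.compl_prod_eq_union, Set.prod_univ, Set.univ_prod]
  exact measure_union_null
    (le_zero_iff.1 ((Measure.le_map_apply measurable_fst.aemeasurable _).trans_eq hX))
    (le_zero_iff.1 ((Measure.le_map_apply measurable_snd.aemeasurable _).trans_eq hY))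

lemma IsCompact.exists_bcf_lintegral_ofReal_eq {Z : Type*} [TopologicalSpace Z]
    [MeasurableSpace Z] [OpensMeasurableSpace Z] {K : Set Z} (hK : IsCompact K) {c : Z → ℝ}
    (hc : Continuous c) :
    ∃ g : Z →ᵇ ℝ, ∀ (m : Measure Z) [IsFiniteMeasure m], m Kᶜ = 0 →
      ∫⁻ z, ENNReal.ofReal (c z) ∂m = ENNReal.ofReal (∫ z, g z ∂m) := by
  obtain ⟨B, hB⟩ := hK.bddAbove_image hc.continuousOn
  have hbound : ∀ z, max (min (c z) B) 0 ∈ Set.Icc 0 (max B 0) := fun z =>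
    ⟨le_max_right _ _, max_le_max (min_le_right _ _) le_rfl⟩
  let g : Z →ᵇ ℝ := .mkOfBound ⟨fun z => max (min (c z) B) 0, by fun_prop⟩ (max B 0)
    fun x y => by
      rw [Real.dist_eq]
      exact abs_sub_le_of_nonneg_of_le (hbound x).1 (hbound x).2 (hbound y).1 (hbound y).2
  refine ⟨g, fun m _ hm => ?_⟩
  have hgc : ∀ᵐ z ∂m, ENNReal.ofReal (c z) = ENNReal.ofReal (g z) := by
    filter_upwards [mem_ae_iff.2 hm] with z hz
    simp [g, min_eq_left (hB (Set.mem_image_of_mem c hz))]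
  rw [lintegral_congr_ae hgc, ofReal_integral_eq_lintegral_ofReal (g.integrable m)
    (Eventually.of_forall fun z => (hbound z).1)]

section Transport

variable {d : ℕ}

lemma continuous_cost (τ : ℝ) :
    Continuous fun z : EuclideanSpace ℝ (Fin d) × EuclideanSpace ℝ (Fin d) => cost τ z.1 z.2 := by
  unfold cost
  fun_prop

lemma UOTcost_le_OTcost (τ α : ℝ) {Ψ₁ Ψ₂ : ℝ → ℝ≥0∞} (h₁ : Ψ₁ 1 = 0) (h₂ : Ψ₂ 1 = 0)
    {X Y : Set (EuclideanSpace ℝ (Fin d))} {μ ν : Measure (EuclideanSpace ℝ (Fin d))}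
    [IsFiniteMeasure μ] [SigmaFinite ν] (hμX : μ Xᶜ = 0) (hνY : ν Yᶜ = 0) :
    UOTcost τ α Ψ₁ Ψ₂ X Y μ ν ≤ OTcost τ μ ν := by
  refine le_iInf₂ fun γ ⟨hγ₁, hγ₂⟩ => ?_
  have hγ : IsFiniteMeasure γ :=
    (Measure.isFiniteMeasure_map_iff measurable_fst.aemeasurable).1 (hγ₁ ▸ inferInstance)
  refine (iInf₂_le γ hγ).trans <|
    (iInf_le _ (measure_compl_prod_eq_zero (hγ₁ ▸ hμX) (hγ₂ ▸ hνY))).trans ?_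
  simp [uotObj, hγ₁, hγ₂, csiszar_self h₁, csiszar_self h₂]

lemma OTcost_ne_top (τ : ℝ) {X Y : Set (EuclideanSpace ℝ (Fin d))} (hX : IsCompact X)
    (hY : IsCompact Y) {μ ν : Measure (EuclideanSpace ℝ (Fin d))} [IsProbabilityMeasure μ]
    [IsProbabilityMeasure ν] (hμX : μ Xᶜ = 0) (hνY : ν Yᶜ = 0) : OTcost τ μ ν ≠ ∞ := by
  obtain ⟨g, hg⟩ := (hX.prod hY).exists_bcf_lintegral_ofReal_eq (continuous_cost τ)
  have h₁ : (μ.prod ν).map Prod.fst = μ := Measure.fst_prod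
  have h₂ : (μ.prod ν).map Prod.snd = ν := Measure.snd_prod
  refine ne_top_of_le_ne_top ?_ (iInf₂_le (μ.prod ν) ⟨h₁, h₂⟩)
  rw [hg _ (measure_compl_prod_eq_zero (by rwa [h₁]) (by rwa [h₂]))]
  exact ENNReal.ofReal_ne_top

variable {τ α : ℝ} {Ψ₁ Ψ₂ : ℝ → ℝ≥0∞} {μ ν : Measure (EuclideanSpace ℝ (Fin d))}
  {π : Measure (EuclideanSpace ℝ (Fin d) × EuclideanSpace ℝ (Fin d))}

lemma lintegral_cost_le_uotObj :
    ∫⁻ z, ENNReal.ofReal (cost τ z.1 z.2) ∂π ≤ uotObj τ α Ψ₁ Ψ₂ μ ν π :=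
  le_self_add.trans le_self_add

lemma mul_csiszar_fst_le_uotObj :
    ENNReal.ofReal α * csiszar Ψ₁ (π.map Prod.fst) μ ≤ uotObj τ α Ψ₁ Ψ₂ μ ν π :=
  le_add_self.trans le_self_add

lemma mul_csiszar_snd_le_uotObj :
    ENNReal.ofReal α * csiszar Ψ₂ (π.map Prod.snd) ν ≤ uotObj τ α Ψ₁ Ψ₂ μ ν π :=
  le_add_self

end Transport

theorem uot_weak_limit_is_optimal_coupling_general
    {d : ℕ} (τ : ℝ)
    (X Y : Set (EuclideanSpace ℝ (Fin d))) (hX : IsCompact X) (hY : IsCompact Y)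
    (μ ν : Measure (EuclideanSpace ℝ (Fin d)))
    [IsProbabilityMeasure μ] [IsProbabilityMeasure ν]
    (hμX : μ Xᶜ = 0) (hνY : ν Yᶜ = 0)
    (Ψ₁ Ψ₂ : ℝ → ℝ≥0∞) (hΨ₁ : IsEntropy Ψ₁) (hΨ₂ : IsEntropy Ψ₂)
    (hΨ₁sc : StrictlyConvexOnPos Ψ₁) (hΨ₂sc : StrictlyConvexOnPos Ψ₂)
    (hΨ₁fin : ∀ x : ℝ, 0 < x → Ψ₁ x ≠ ∞) (hΨ₂fin : ∀ x : ℝ, 0 < x → Ψ₂ x ≠ ∞)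
    (a : ℕ → ℝ) (ha : Tendsto a atTop atTop)
    (π : ℕ → Measure (EuclideanSpace ℝ (Fin d) × EuclideanSpace ℝ (Fin d)))
    (hπfin : ∀ n, IsFiniteMeasure (π n)) (hπsupp : ∀ n, π n ((X ×ˢ Y)ᶜ) = 0)
    (hπmin : ∀ n, uotObj τ (a n) Ψ₁ Ψ₂ μ ν (π n) = UOTcost τ (a n) Ψ₁ Ψ₂ X Y μ ν)
    (πlim : Measure (EuclideanSpace ℝ (Fin d) × EuclideanSpace ℝ (Fin d))) [IsFiniteMeasure πlim]
    (hconv : ∀ f : EuclideanSpace ℝ (Fin d) × EuclideanSpace ℝ (Fin d) → ℝ, Continuous f → (∃ C : ℝ, ∀ z, |f z| ≤ C) →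
      Tendsto (fun n => ∫ z, f z ∂(π n)) atTop (𝓝 (∫ z, f z ∂πlim))) :
    πlim.map Prod.fst = μ ∧ πlim.map Prod.snd = ν ∧
      (∫⁻ z, ENNReal.ofReal (cost τ z.1 z.2) ∂πlim) = OTcost τ μ ν := by
  have hweak : ∀ f : EuclideanSpace ℝ (Fin d) × EuclideanSpace ℝ (Fin d) →ᵇ ℝ,
      Tendsto (fun n => ∫ z, f z ∂(π n)) atTop (𝓝 (∫ z, f z ∂πlim)) := fun f =>
    hconv f f.continuous ⟨‖f‖, fun z => (Real.norm_eq_abs _).symm.trans_le (f.norm_coe_le_norm z)⟩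
  have hM := OTcost_ne_top τ hX hY hμX hνY
  have hobj : ∀ n, uotObj τ (a n) Ψ₁ Ψ₂ μ ν (π n) ≤ OTcost τ μ ν := fun n =>
    (hπmin n).trans_le (UOTcost_le_OTcost τ (a n) hΨ₁.one_eq_zero hΨ₂.one_eq_zero hμX hνY)
  have hα := ENNReal.tendsto_ofReal_atTop.comp ha
  have hfst : πlim.map Prod.fst = μ := map_eq_of_tendsto_integral continuous_fst hweak <|
    tendsto_integral_of_tendsto_csiszar hΨ₁ hΨ₁sc hΨ₁fin <|
      ENNReal.tendsto_nhds_zero_of_mul_le hα hM fun n => mul_csiszar_fst_le_uotObj.trans (hobj n)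
  have hsnd : πlim.map Prod.snd = ν := map_eq_of_tendsto_integral continuous_snd hweak <|
    tendsto_integral_of_tendsto_csiszar hΨ₂ hΨ₂sc hΨ₂fin <|
      ENNReal.tendsto_nhds_zero_of_mul_le hα hM fun n => mul_csiszar_snd_le_uotObj.trans (hobj n)
  refine ⟨hfst, hsnd, le_antisymm ?_ (iInf₂_le πlim ⟨hfst, hsnd⟩)⟩
  obtain ⟨g, hg⟩ := (hX.prod hY).exists_bcf_lintegral_ofReal_eq (continuous_cost τ)
  rw [hg πlim (measure_compl_prod_eq_zero (by rwa [hfst]) (by rwa [hsnd]))]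
  refine le_of_tendsto' ((ENNReal.continuous_ofReal.tendsto _).comp (hweak g)) fun n => ?_
  rw [Function.comp_apply, ← hg (π n) (hπsupp n)]
  exact lintegral_cost_le_uotObj.trans (hobj n)

/-- If `α_n → ∞`, each `π^{α_n}` attains `C_ub^{α_n}(μ,ν)`, and
`π^{α_n}` converges weakly to `π`, then `π` is a coupling of `μ` and `ν` and it is
optimal for the optimal transport problem. -/
theorem uot_weak_limit_is_optimal_coupling
    {d : ℕ} (τ : ℝ) (hτ : 0 < τ)
    (X Y : Set (EuclideanSpace ℝ (Fin d))) (hX : IsCompact X) (hY : IsCompact Y)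
    (μ ν : Measure (EuclideanSpace ℝ (Fin d)))
    [IsProbabilityMeasure μ] [IsProbabilityMeasure ν]
    (hμX : μ Xᶜ = 0) (hνY : ν Yᶜ = 0)
    (Ψ₁ Ψ₂ : ℝ → ℝ≥0∞) (hΨ₁ : IsEntropy Ψ₁) (hΨ₂ : IsEntropy Ψ₂)
    (hΨ₁sc : StrictlyConvexOnPos Ψ₁) (hΨ₂sc : StrictlyConvexOnPos Ψ₂)
    (hΨ₁fin : ∀ x : ℝ, 0 < x → Ψ₁ x ≠ ∞) (hΨ₂fin : ∀ x : ℝ, 0 < x → Ψ₂ x ≠ ∞)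
    (a : ℕ → ℝ) (hapos : ∀ n, 0 < a n) (ha : Tendsto a atTop atTop)
    (π : ℕ → Measure (EuclideanSpace ℝ (Fin d) × EuclideanSpace ℝ (Fin d)))
    (hπfin : ∀ n, IsFiniteMeasure (π n)) (hπsupp : ∀ n, π n ((X ×ˢ Y)ᶜ) = 0)
    (hπmin : ∀ n, uotObj τ (a n) Ψ₁ Ψ₂ μ ν (π n) = UOTcost τ (a n) Ψ₁ Ψ₂ X Y μ ν)
    (πlim : Measure (EuclideanSpace ℝ (Fin d) × EuclideanSpace ℝ (Fin d))) [IsFiniteMeasure πlim]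
    (hconv : ∀ f : EuclideanSpace ℝ (Fin d) × EuclideanSpace ℝ (Fin d) → ℝ, Continuous f → (∃ C : ℝ, ∀ z, |f z| ≤ C) →
      Tendsto (fun n => ∫ z, f z ∂(π n)) atTop (𝓝 (∫ z, f z ∂πlim))) :
    πlim.map Prod.fst = μ ∧ πlim.map Prod.snd = ν ∧
      (∫⁻ z, ENNReal.ofReal (cost τ z.1 z.2) ∂πlim) = OTcost τ μ ν :=
  uot_weak_limit_is_optimal_coupling_general τ X Y hX hY μ ν hμX hνY Ψ₁ Ψ₂ hΨ₁ hΨ₂ hΨ₁sc hΨ₂sc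
    hΨ₁fin hΨ₂fin a ha π hπfin hπsupp hπmin πlim hconv

end
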